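/- Let G be a finite graph, F a field, and d a positive integer. If M ∈ F^{(V×[d])×(V×[d])} is a d-representation of G (each diagonal block M_{vv} = I_d and M_{uv} = M_{vu} = 0 blockwise whenever uv ∉ E), then d · α(G) ≤ rank(M). -/

import Mathlib

open SimpleGraph
open Matrix

/-!
The rows and columns of `M` indexed by `s × [d]`, for an independent set `s`, form the
identity submatrix: the diagonal blocks are `I_d` and the off-diagonal blocks vanish since no
two vertices of `s` are adjacent. Rank does not increase under passing to a submatrix.
-/

/-- The independence number of a graph on a finite vertex set. -/
noncomputable def indepNum {V : Type*} [Fintype V] (G : SimpleGraph V) : ℕ :=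
  sSup {n : ℕ | ∃ s : Finset V,
    (∀ a ∈ s, ∀ b ∈ s, a ≠ b → ¬ G.Adj a b) ∧ s.card = n}

lemma indepNum_eq_simpleGraph_indepNum {V : Type*} [Fintype V] (G : SimpleGraph V) :
    _root_.indepNum G = G.indepNum := by
  simp only [_root_.indepNum, SimpleGraph.indepNum, isNIndepSet_iff]
  rfl

namespace Matrix

variable {V ι R : Type*} [DecidableEq ι] {G : SimpleGraph V}

lemma submatrix_prod_eq_one_of_isIndepSet [DecidableEq V] [Zero R] [One R]
    {M : Matrix (V × ι) (V × ι) R} (hdiag : ∀ v i j, M (v, i) (v, j) = if i = j then 1 else 0)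
    (hoff : ∀ u v, u ≠ v → ¬ G.Adj u v → ∀ i j, M (u, i) (v, j) = 0)
    {s : Finset V} (hs : G.IsIndepSet s) :
    M.submatrix (Prod.map ((↑) : s → V) id) (Prod.map ((↑) : s → V) id) = 1 := by
  ext ⟨u, i⟩ ⟨v, j⟩
  by_cases huv : u = v
  · subst huv
    simp [one_apply, hdiag]
  · have hne : (u : V) ≠ v := Subtype.coe_injective.ne huv
    simp [huv, hoff u v hne (hs u.2 v.2 hne)]

lemma card_mul_card_le_rank_of_isIndepSet [Fintype V] [Fintype ι] [CommRing R]
    [StrongRankCondition R] {M : Matrix (V × ι) (V × ι) R}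
    (hdiag : ∀ v i j, M (v, i) (v, j) = if i = j then 1 else 0)
    (hoff : ∀ u v, u ≠ v → ¬ G.Adj u v → ∀ i j, M (u, i) (v, j) = 0)
    {s : Finset V} (hs : G.IsIndepSet s) :
    s.card * Fintype.card ι ≤ M.rank := by
  classical
  calc s.card * Fintype.card ι = (1 : Matrix (s × ι) (s × ι) R).rank := by
        simp [rank_one, Fintype.card_prod]
    _ = (M.submatrix (Prod.map ((↑) : s → V) id) (Prod.map ((↑) : s → V) id)).rank := by
        rw [submatrix_prod_eq_one_of_isIndepSet hdiag hoff hs]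
    _ ≤ M.rank := rank_submatrix_le _ _ _

end Matrix

theorem stmt5_general {V : Type*} [Fintype V] {F : Type*} [Field F]
    (G : SimpleGraph V) (d : ℕ)
    (M : Matrix (V × Fin d) (V × Fin d) F)
    (hdiag : ∀ v i j, M (v, i) (v, j) = if i = j then 1 else 0)
    (hoff : ∀ u v, u ≠ v → ¬ G.Adj u v → ∀ i j,
      M (u, i) (v, j) = 0 ∧ M (v, j) (u, i) = 0) :
    d * _root_.indepNum G ≤ M.rank := by
  obtain ⟨s, hs⟩ := G.exists_isNIndepSet_indepNum
  rw [indepNum_eq_simpleGraph_indepNum, ← hs.card_eq, mul_comm]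
  simpa using card_mul_card_le_rank_of_isIndepSet hdiag
    (fun u v huv hadj i j => (hoff u v huv hadj i j).1) hs.isIndepSet

theorem stmt5 {V : Type*} [Fintype V] [DecidableEq V] {F : Type*} [Field F]
    (G : SimpleGraph V) (d : ℕ) (hd : 0 < d)
    (M : Matrix (V × Fin d) (V × Fin d) F)
    (hdiag : ∀ v i j, M (v, i) (v, j) = if i = j then 1 else 0)
    (hoff : ∀ u v, u ≠ v → ¬ G.Adj u v → ∀ i j,
      M (u, i) (v, j) = 0 ∧ M (v, j) (u, i) = 0) :
    d * _root_.indepNum G ≤ M.rank :=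
  stmt5_general G d M hdiag hoff
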